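/- arXiv:2403.03783 — 8 statements merged into one kernel-verified Lean document; each statement's English description precedes it below -/
import Mathlib

section
/- Assume r + α < λ. The Jacobian matrix J = [[-rλ/(r+α), r+α],[-(rλ/(r+α))(1-(r+α)/λ), 0]] of the system at the nontrivial fixed point has eigenvalues λ± = (1/2)( -rλ/(r+α) ± (rλ/(r+α))·√(1 - (4(r+α)²/(rλ))(1-(r+α)/λ)) ), and both eigenvalues have strictly negative real part. -/
theorem eigenvalues_nontrivial_fixed_point (r α lam : ℝ) (hr : 0 < r) (hα : 0 < α)
    (hlam : 0 < lam) (h : r + α < lam) :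
    let a : ℝ := r * lam / (r + α)
    let D : ℝ := 1 - (4 * (r + α) ^ 2 / (r * lam)) * (1 - (r + α) / lam)
    let trJ : ℝ := -a
    let detJ : ℝ := (r + α) * (a * (1 - (r + α) / lam))
    let lamPlus : ℂ := (1 / 2) * (-(a : ℂ) + (a : ℂ) * (D : ℂ) ^ ((1 : ℂ) / 2))
    let lamMinus : ℂ := (1 / 2) * (-(a : ℂ) - (a : ℂ) * (D : ℂ) ^ ((1 : ℂ) / 2))
    (∀ z : ℂ, z ^ 2 - (trJ : ℂ) * z + (detJ : ℂ) = 0 ↔ (z = lamPlus ∨ z = lamMinus)) ∧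
    lamPlus.re < 0 ∧ lamMinus.re < 0 := by
  intro a D trJ detJ lamPlus lamMinus
  have hrα : 0 < r + α := by linarith
  have ha : 0 < a := by
    simp only [a]
    positivity
  have hD1 : D < 1 := by
    simp only [D]
    have h1 : 0 < 1 - (r + α) / lam := by
      rw [sub_pos, div_lt_one hlam]; exact h
    have h2 : 0 < 4 * (r + α) ^ 2 / (r * lam) := by positivity
    nlinarith
  have hkey : a ^ 2 * D = a ^ 2 - 4 * detJ := by
    simp only [a, D, detJ]
    field_simp
  have hs2 : ((D : ℂ) ^ ((1 : ℂ) / 2)) ^ 2 = (D : ℂ) := by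
    by_cases hD0 : (D : ℂ) = 0
    · rw [hD0, Complex.zero_cpow (by norm_num : (1:ℂ)/2 ≠ 0)]
      simp
    · rw [sq, ← Complex.cpow_add _ _ hD0]
      norm_num
  have hkeyC : (a : ℂ) ^ 2 * (D : ℂ) = (a : ℂ) ^ 2 - 4 * (detJ : ℂ) := by
    exact_mod_cast congrArg Complex.ofReal hkey
  have hfac : ∀ z : ℂ, z ^ 2 - (trJ : ℂ) * z + (detJ : ℂ) = (z - lamPlus) * (z - lamMinus) := by
    intro z
    simp only [lamPlus, lamMinus, trJ]
    push_cast
    linear_combination ((a : ℂ) ^ 2 / 4) * hs2 + (1/4 : ℂ) * hkeyC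
  have hre : ((D : ℂ) ^ ((1 : ℂ) / 2)).re ^ 2 - ((D : ℂ) ^ ((1 : ℂ) / 2)).im ^ 2 = D := by
    have := congrArg Complex.re hs2
    simpa [sq, Complex.mul_re] using this
  have him : ((D : ℂ) ^ ((1 : ℂ) / 2)).re * ((D : ℂ) ^ ((1 : ℂ) / 2)).im = 0 := by
    have := congrArg Complex.im hs2
    simp [sq, Complex.mul_im] at this
    linarith
  have hp : lamPlus.re = (-a + a * ((D : ℂ) ^ ((1 : ℂ) / 2)).re) / 2 := by
    simp [lamPlus, Complex.mul_re, Complex.add_re, Complex.neg_re, Complex.div_re]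
    ring
  have hm : lamMinus.re = (-a - a * ((D : ℂ) ^ ((1 : ℂ) / 2)).re) / 2 := by
    simp [lamMinus, Complex.mul_re, Complex.sub_re, Complex.neg_re, Complex.div_re]
    ring
  clear_value a D trJ detJ lamPlus lamMinus
  refine ⟨fun z => by rw [hfac z, mul_eq_zero, sub_eq_zero, sub_eq_zero], ?_, ?_⟩ <;>
    [rw [hp]; rw [hm]] <;>
  · rcases mul_eq_zero.mp him with h0 | h0
    · rw [h0]; simp; linarith
    · rw [h0] at hre
      nlinarith [sq_nonneg (((D : ℂ) ^ ((1 : ℂ) / 2)).re + 1),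
        sq_nonneg (((D : ℂ) ^ ((1 : ℂ) / 2)).re - 1)]
end

section
/- Assume r + α < λ. The eigenvalues of the matrix J = [[-rλ/(r+α), r+α],[-(rλ/(r+α))(1-(r+α)/λ), 0]] are real if and only if λ ≤ λ₋ or λ ≥ λ₊, where λ∓ = (2(r+α)²/r)(1 ∓ √(α/(r+α))); they are non-real complex conjugates with negative real part when λ₋ < λ < λ₊. -/
/-- If the discriminant is nonnegative, every complex root of the monic
quadratic `z^2 - t z + d` is real. -/
lemma aux_real_root (t d : ℝ) (hD : 0 ≤ t ^ 2 - 4 * d) (z : ℂ)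
    (hz : z ^ 2 - (t : ℂ) * z + (d : ℂ) = 0) : z.im = 0 := by
  by_contra hy
  have h1 : (z ^ 2 - (t : ℂ) * z + (d : ℂ)).re = 0 := by rw [hz]; simp
  have h2 : (z ^ 2 - (t : ℂ) * z + (d : ℂ)).im = 0 := by rw [hz]; simp
  simp [pow_two, Complex.mul_re, Complex.mul_im] at h1 h2
  have hx : z.re = t / 2 := by
    have : z.im * (z.re + z.re - t) = 0 := by ring_nf; ring_nf at h2; linarith
    rcases mul_eq_zero.mp this with h | h
    · exact absurd h hy
    · linarith
  have hy2 : 0 < z.im * z.im := mul_pos_of_neg_of_neg (lt_of_le_of_ne (le_of_not_gt (fun hpos => hy (by nlinarith [hx]))) hy) (lt_of_le_of_ne (le_of_not_gt (fun hpos => hy (by nlinarith [hx]))) hy)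
  nlinarith [hx]

/-- If the discriminant is negative, every complex root of the monic
quadratic has nonzero imaginary part and real part `t/2`. -/
lemma aux_complex_root (t d : ℝ) (hD : t ^ 2 - 4 * d < 0) (z : ℂ)
    (hz : z ^ 2 - (t : ℂ) * z + (d : ℂ) = 0) : z.im ≠ 0 ∧ z.re = t / 2 := by
  have h1 : (z ^ 2 - (t : ℂ) * z + (d : ℂ)).re = 0 := by rw [hz]; simp
  have h2 : (z ^ 2 - (t : ℂ) * z + (d : ℂ)).im = 0 := by rw [hz]; simp
  simp [pow_two, Complex.mul_re, Complex.mul_im] at h1 h2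
  have hy : z.im ≠ 0 := by
    intro hy0
    rw [hy0] at h1
    nlinarith [sq_nonneg (z.re - t / 2)]
  refine ⟨hy, ?_⟩
  have : z.im * (z.re + z.re - t) = 0 := by ring_nf; ring_nf at h2; linarith
  rcases mul_eq_zero.mp this with h | h
  · exact absurd h hy
  · linarith

/-- If the discriminant is negative there exists a non-real root. -/
lemma aux_exists_root (t d : ℝ) (hD : t ^ 2 - 4 * d < 0) :
    ∃ z : ℂ, z ^ 2 - (t : ℂ) * z + (d : ℂ) = 0 ∧ z.im ≠ 0 := by
  set u : ℝ := Real.sqrt (4 * d - t ^ 2) with hu_def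
  have hu2 : u ^ 2 = 4 * d - t ^ 2 := Real.sq_sqrt (by linarith)
  have hupos : 0 < u := Real.sqrt_pos.mpr (by linarith)
  refine ⟨(t / 2 : ℝ) + (u / 2 : ℝ) * Complex.I, ?_, ?_⟩
  · have hu2' : ((u : ℂ)) ^ 2 = 4 * (d : ℂ) - (t : ℂ) ^ 2 := by exact_mod_cast hu2
    push_cast
    linear_combination (Complex.I_sq) * ((u : ℂ) ^ 2 / 4) - hu2' / 4
  · simp [Complex.add_im, Complex.mul_im, hupos.ne']

theorem eigenvalues_real_iff (r α lam : ℝ) (hr : 0 < r) (hα : 0 < α)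
    (hlam : 0 < lam) (h : r + α < lam) :
    let a : ℝ := r * lam / (r + α)
    let trJ : ℝ := -a
    let detJ : ℝ := (r + α) * (a * (1 - (r + α) / lam))
    let lamMinus : ℝ := (2 * (r + α) ^ 2 / r) * (1 - Real.sqrt (α / (r + α)))
    let lamPlus : ℝ := (2 * (r + α) ^ 2 / r) * (1 + Real.sqrt (α / (r + α)))
    ((∀ z : ℂ, z ^ 2 - (trJ : ℂ) * z + (detJ : ℂ) = 0 → z.im = 0) ↔
      (lam ≤ lamMinus ∨ lamPlus ≤ lam)) ∧
    (lamMinus < lam → lam < lamPlus →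
      ∀ z : ℂ, z ^ 2 - (trJ : ℂ) * z + (detJ : ℂ) = 0 →
        z.im ≠ 0 ∧ z.re < 0 ∧
          (starRingEnd ℂ z) ^ 2 - (trJ : ℂ) * (starRingEnd ℂ z) + (detJ : ℂ) = 0) := by
  intro a trJ detJ lamMinus lamPlus
  have hra : (0 : ℝ) < r + α := by linarith
  set s : ℝ := Real.sqrt (α / (r + α)) with hs_def
  have hs0 : 0 ≤ s := Real.sqrt_nonneg _
  have hs2 : s ^ 2 = α / (r + α) := Real.sq_sqrt (by positivity)
  have hsmul : s ^ 2 * (r + α) = α := by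
    rw [hs2]; field_simp
  -- key discriminant identity
  have key : trJ ^ 2 - 4 * detJ
      = (r / (r + α)) ^ 2 * ((lam - lamMinus) * (lam - lamPlus)) := by
    show (-(r * lam / (r + α))) ^ 2
        - 4 * ((r + α) * (r * lam / (r + α) * (1 - (r + α) / lam)))
      = (r / (r + α)) ^ 2 *
        ((lam - (2 * (r + α) ^ 2 / r) * (1 - s)) * (lam - (2 * (r + α) ^ 2 / r) * (1 + s)))
    field_simp
    linear_combination (4 * (r + α) ^ 3) * hsmul
  have hcoef : 0 < (r / (r + α)) ^ 2 := by positivity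
  have hmono : lamMinus ≤ lamPlus := by
    show (2 * (r + α) ^ 2 / r) * (1 - s) ≤ (2 * (r + α) ^ 2 / r) * (1 + s)
    have : 0 < 2 * (r + α) ^ 2 / r := by positivity
    nlinarith
  have htneg : trJ < 0 := by
    show -(r * lam / (r + α)) < 0
    have : 0 < r * lam / (r + α) := by positivity
    linarith
  constructor
  · constructor
    · intro hall
      by_contra hcon
      push_neg at hcon
      obtain ⟨h1, h2⟩ := hcon
      have hD : trJ ^ 2 - 4 * detJ < 0 := by
        rw [key]
        have : (lam - lamMinus) * (lam - lamPlus) < 0 :=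
          mul_neg_of_pos_of_neg (by linarith) (by linarith)
        nlinarith
      obtain ⟨z, hz, him⟩ := aux_exists_root trJ detJ hD
      exact him (hall z hz)
    · intro hle z hz
      have hD : 0 ≤ trJ ^ 2 - 4 * detJ := by
        rw [key]
        rcases hle with h1 | h1
        · have : 0 ≤ (lam - lamMinus) * (lam - lamPlus) := by nlinarith
          nlinarith
        · have : 0 ≤ (lam - lamMinus) * (lam - lamPlus) :=
            mul_nonneg (by linarith) (by linarith)
          nlinarith
      exact aux_real_root trJ detJ hD z hz
  · intro hlt1 hlt2 z hz
    have hD : trJ ^ 2 - 4 * detJ < 0 := by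
      rw [key]
      have : (lam - lamMinus) * (lam - lamPlus) < 0 :=
        mul_neg_of_pos_of_neg (by linarith) (by linarith)
      nlinarith
    obtain ⟨him, hre⟩ := aux_complex_root trJ detJ hD z hz
    refine ⟨him, by rw [hre]; exact div_neg_of_neg_of_pos htneg two_pos, ?_⟩
    have := congrArg (starRingEnd ℂ) hz
    simpa [map_sub, map_add, map_pow, map_mul, Complex.conj_ofReal] using this
end

section
/- For all r, α > 0, the quantity λ₋ := (2(r+α)²/r)(1 - √(α/(r+α))) satisfies r + α < λ₋. -/
/-!
With `t = √(α / (r + α)) ∈ [0, 1)` one has `r = (r + α)(1 - t)(1 + t)`, so the factor `1 - t`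
cancels and `λ₋ = 2(r + α) / (1 + t)`, which exceeds `r + α` because `1 + t < 2`.
-/

theorem lt_two_mul_div_one_add {s t : ℝ} (hs : 0 < s) (ht0 : 0 ≤ t) (ht1 : t < 1) :
    s < 2 * s / (1 + t) := by
  rw [lt_div_iff₀ (by linarith)]
  nlinarith

theorem sqrt_div_add_lt_one {r α : ℝ} (hr : 0 < r) (hα : 0 ≤ α) :
    Real.sqrt (α / (r + α)) < 1 :=
  (Real.sqrt_lt' one_pos).mpr (by rw [one_pow, div_lt_one (by linarith)]; linarith)

theorem lamMinus_gt (r α : ℝ) (hr : 0 < r) (hα : 0 < α) :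
    r + α < (2 * (r + α) ^ 2 / r) * (1 - Real.sqrt (α / (r + α))) := by
  have ht1 := sqrt_div_add_lt_one hr hα.le
  set s := r + α with hs_def
  have hs : 0 < s := by positivity
  set t := Real.sqrt (α / s)
  have hr_eq : r = s * (1 - t) * (1 + t) := by
    have ht_sq : t ^ 2 = α / s := Real.sq_sqrt (by positivity)
    field_simp at ht_sq
    linear_combination ht_sq - hs_def
  calc s < 2 * s / (1 + t) := lt_two_mul_div_one_add hs (Real.sqrt_nonneg _) ht1
    _ = (2 * s ^ 2 / r) * (1 - t) := by
      have h_one_add_t : 0 < 1 + t := by positivity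
      rw [div_mul_eq_mul_div, eq_div_iff hr.ne', hr_eq]
      field_simp
end

section
/- The divergence of the rescaled vector field g(m,v)·(λ(1-m)v - rm, -αv + λ(1-m)v - rv), where g(m,v) = 1/v, equals -λ - r/v, which is strictly negative for all 0 ≤ m ≤ 1 and 0 < v ≤ 1. (Dulac's criterion: the system has no periodic orbits in this region.) -/
theorem dulac_criterion (r α lam : ℝ) (hr : 0 < r) (hα : 0 < α) (hlam : 0 < lam)
    (m v : ℝ) (hm0 : 0 ≤ m) (hm1 : m ≤ 1) (hv0 : 0 < v) (hv1 : v ≤ 1) :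
    deriv (fun m' : ℝ => (lam * (1 - m') * v - r * m') / v) m +
      deriv (fun v' : ℝ => (-α * v' + lam * (1 - m) * v' - r * v') / v') v
      = -lam - r / v ∧ -lam - r / v < 0 := by
  have hvne : v ≠ 0 := hv0.ne'
  constructor
  · have h1 : deriv (fun m' : ℝ => (lam * (1 - m') * v - r * m') / v) m
        = (-lam * v - r) / v := by
      have : HasDerivAt (fun m' : ℝ => (lam * (1 - m') * v - r * m') / v)
          ((-lam * v - r) / v) m := by
        have h : HasDerivAt (fun m' : ℝ => (lam * (1 - m') * v - r * m'))
            (-lam * v - r) m := by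
          have := ((hasDerivAt_id m).const_sub 1).const_mul lam |>.mul_const v
            |>.sub ((hasDerivAt_id m).const_mul r)
          exact this.congr_deriv (by ring)
        simpa using h.div_const v
      exact this.deriv
    have h2 : deriv (fun v' : ℝ => (-α * v' + lam * (1 - m) * v' - r * v') / v') v = 0 := by
      have heq : (fun v' : ℝ => (-α * v' + lam * (1 - m) * v' - r * v') / v')
          =ᶠ[nhds v] (fun _ : ℝ => -α + lam * (1 - m) - r) := by
        filter_upwards [eventually_ne_nhds hvne] with x hx
        field_simp
      rw [heq.deriv_eq, deriv_const]
    rw [h1, h2]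
    field_simp
    ring
  · have : 0 < r / v := div_pos hr hv0
    linarith
end

section
/- Let v : [0,∞) → [0,1] be continuous and let k solve k̇ = r(1-k) - λ v(t) k with k(0) ∈ {0,1}. Define g_t(x) = (λ/α) k(t + (1/α)ln x) v(t + (1/α)ln x) x^{(r-α)/α} for x ∈ (e^{-αt}, 1]. Then ∫_{e^{-αt}}^1 g_t(x) dx = 1 - k(t) - e^{-rt}(1 - k(0)). -/
theorem g_integral_identity (r α lam : ℝ) (hr : 0 < r) (hα : 0 < α) (hlam : 0 < lam)
    (v k : ℝ → ℝ) (hv_cont : ContinuousOn v (Set.Ici 0))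
    (hv_range : ∀ t ∈ Set.Ici (0:ℝ), v t ∈ Set.Icc (0:ℝ) 1)
    (hk : ∀ t ∈ Set.Ici (0:ℝ), HasDerivAt k (r * (1 - k t) - lam * v t * k t) t)
    (hk0 : k 0 = 0 ∨ k 0 = 1) (t : ℝ) (ht : 0 < t) :
    (∫ x in Real.exp (-α * t)..1,
        (lam / α) * k (t + Real.log x / α) * v (t + Real.log x / α) * x ^ ((r - α) / α))
      = 1 - k t - Real.exp (-r * t) * (1 - k 0) := by
  have hk_cont : ContinuousOn k (Set.Ici 0) :=
    fun s hs => (hk s hs).continuousAt.continuousWithinAt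
  set G : ℝ → ℝ := fun x =>
    (lam / α) * k (t + Real.log x / α) * v (t + Real.log x / α) * x ^ ((r - α) / α) with hG
  set f : ℝ → ℝ := fun s => Real.exp (α * (s - t)) with hfdef
  have hf : ∀ s : ℝ, HasDerivAt f (α * Real.exp (α * (s - t))) s := by
    intro s
    have h1 : HasDerivAt (fun s : ℝ => α * (s - t)) α s := by
      simpa using ((hasDerivAt_id s).sub_const t).const_mul α
    convert h1.exp using 1; ring
  -- image of f over [0,t]
  have himg : f '' Set.uIcc 0 t ⊆ Set.Icc (Real.exp (-α * t)) 1 := by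
    rintro x ⟨s, hs, rfl⟩
    rw [Set.uIcc_of_le ht.le] at hs
    constructor
    · exact Real.exp_le_exp.2 (by nlinarith [hs.1])
    · calc f s ≤ Real.exp 0 := Real.exp_le_exp.2 (by nlinarith [hs.2])
        _ = 1 := Real.exp_zero
  have hφmaps : ∀ x ∈ Set.Icc (Real.exp (-α * t)) 1, t + Real.log x / α ∈ Set.Ici (0:ℝ) := by
    rintro x ⟨h1, h2⟩
    have hx0 : (0:ℝ) < x := lt_of_lt_of_le (Real.exp_pos _) h1
    have : -α * t ≤ Real.log x := (Real.le_log_iff_exp_le hx0).2 h1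
    have : -t ≤ Real.log x / α := by
      rw [le_div_iff₀ hα]; nlinarith
    simp only [Set.mem_Ici]; linarith
  have hφcont : ContinuousOn (fun x => t + Real.log x / α) (Set.Icc (Real.exp (-α * t)) 1) := by
    apply continuousOn_const.add
    exact (Real.continuousOn_log.mono (fun x hx =>
      (lt_of_lt_of_le (Real.exp_pos _) hx.1).ne')).div_const α
  have hGcont : ContinuousOn G (Set.Icc (Real.exp (-α * t)) 1) := by
    apply ContinuousOn.mul
    apply ContinuousOn.mul
    apply ContinuousOn.mul continuousOn_const
    · exact hk_cont.comp hφcont hφmaps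
    · exact hv_cont.comp hφcont hφmaps
    · intro x hx
      exact (Real.continuousAt_rpow_const x _
        (Or.inl (lt_of_lt_of_le (Real.exp_pos _) hx.1).ne')).continuousWithinAt
  have sub : (∫ x in Real.exp (-α * t)..1, G x)
      = ∫ s in (0:ℝ)..t, (α * Real.exp (α * (s - t))) * G (f s) := by
    have := intervalIntegral.integral_comp_smul_deriv'
      (f := f) (f' := fun s => α * Real.exp (α * (s - t))) (g := G) (a := 0) (b := t)
      (fun s _ => hf s)
      (by fun_prop)
      (hGcont.mono himg)
    simp only [smul_eq_mul, Function.comp] at this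
    rw [show f 0 = Real.exp (-α * t) from by simp only [hfdef]; congr 1; ring,
      show f t = 1 from by simp [hfdef]] at this
    rw [← this]
  have hpt : ∀ s : ℝ, (α * Real.exp (α * (s - t))) * G (f s)
      = lam * Real.exp (r * (s - t)) * v s * k s := by
    intro s
    have hlog : Real.log (f s) = α * (s - t) := Real.log_exp _
    have harg : t + Real.log (f s) / α = s := by
      rw [hlog]; field_simp; ring
    have hrpow : (f s : ℝ) ^ ((r - α) / α) = Real.exp ((s - t) * (r - α)) := by
      rw [hfdef]
      rw [← Real.exp_mul]
      congr 1
      field_simp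
    simp only [hG, harg, hrpow]
    rw [show r * (s - t) = α * (s - t) + (s - t) * (r - α) by ring, Real.exp_add]
    field_simp
  rw [sub, intervalIntegral.integral_congr (fun s _ => hpt s)]
  -- FTC
  set F : ℝ → ℝ := fun s => Real.exp (-r * t) * ((1 - k s) * Real.exp (r * s)) with hF
  have hderiv : ∀ s ∈ Set.uIcc (0:ℝ) t,
      HasDerivAt F (lam * Real.exp (r * (s - t)) * v s * k s) s := by
    intro s hs
    rw [Set.uIcc_of_le ht.le] at hs
    have hs0 : s ∈ Set.Ici (0:ℝ) := hs.1
    have h1 : HasDerivAt (fun s => (1 - k s)) (-(r * (1 - k s) - lam * v s * k s)) s :=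
      (hk s hs0).const_sub 1
    have h2 : HasDerivAt (fun s => Real.exp (r * s)) (r * Real.exp (r * s)) s := by
      simpa [mul_comm] using HasDerivAt.exp
        (by simpa using (hasDerivAt_id s).const_mul r : HasDerivAt (fun s => r * s) r s)
    have h3 : HasDerivAt F (Real.exp (-r * t) * (-(r * (1 - k s) - lam * v s * k s) * Real.exp (r * s) + (1 - k s) * (r * Real.exp (r * s)))) s := (h1.mul h2).const_mul (Real.exp (-r * t))
    convert h3 using 1
    rw [show r * (s - t) = -r * t + r * s by ring, Real.exp_add]
    ring
  have hint : IntervalIntegrable (fun s => lam * Real.exp (r * (s - t)) * v s * k s)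
      MeasureTheory.volume 0 t := by
    apply ContinuousOn.intervalIntegrable
    apply ContinuousOn.mul
    apply ContinuousOn.mul
    · fun_prop
    · exact hv_cont.mono (by rw [Set.uIcc_of_le ht.le]; exact fun x hx => hx.1)
    · exact hk_cont.mono (by rw [Set.uIcc_of_le ht.le]; exact fun x hx => hx.1)
  rw [intervalIntegral.integral_eq_sub_of_hasDerivAt hderiv hint]
  simp only [hF]
  rw [mul_zero, Real.exp_zero, show Real.exp (-r * t) * ((1 - k t) * Real.exp (r * t))
    = (1 - k t) * (Real.exp (-r * t) * Real.exp (r * t)) by ring, ← Real.exp_add]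
  simp
end

section
/- Let F be a 2×2 real matrix with tr(F) < 0 and det(F) > 0, and let A = ΣΣᵀ be symmetric positive semidefinite with entries a_{ij}. Then for every ω ∈ ℝ, the matrix (F - iωI) is invertible, and the (1,1) entry of S(ω) = (F - iωI)^{-1} A (Fᵀ + iωI)^{-1} equals (a₁₁ω² + a₁₁F₂₂² + a₂₂F₁₂² - 2F₁₂F₂₂a₁₂) / ((ω² - det F)² + ω² (tr F)²). -/
set_option maxHeartbeats 1600000
open Matrix Complex

theorem spectral_density_entry (F A : Matrix (Fin 2) (Fin 2) ℝ)
    (htr : Matrix.trace F < 0) (hdet : 0 < F.det)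
    (hAsymm : Aᵀ = A) (hApsd : A.PosSemidef) (ω : ℝ) :
    letI Fc : Matrix (Fin 2) (Fin 2) ℂ := F.map Complex.ofReal
    letI Ac : Matrix (Fin 2) (Fin 2) ℂ := A.map Complex.ofReal
    IsUnit (Fc - (Complex.I * ω) • (1 : Matrix (Fin 2) (Fin 2) ℂ)) ∧
    ((Fc - (Complex.I * ω) • 1)⁻¹ * Ac * (Fcᵀ + (Complex.I * ω) • 1)⁻¹) 0 0 =
      ((A 0 0 * ω ^ 2 + A 0 0 * F 1 1 ^ 2 + A 1 1 * F 0 1 ^ 2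
          - 2 * F 0 1 * F 1 1 * A 0 1) /
        ((ω ^ 2 - F.det) ^ 2 + ω ^ 2 * (Matrix.trace F) ^ 2) : ℝ) := by
  have htrne : Matrix.trace F ≠ 0 := ne_of_lt htr
  have hdF : F.det = F 0 0 * F 1 1 - F 0 1 * F 1 0 := Matrix.det_fin_two F
  have htrF : Matrix.trace F = F 0 0 + F 1 1 := by
    simp [Matrix.trace, Matrix.diag, Fin.sum_univ_two]
  have hden : 0 < (ω ^ 2 - F.det) ^ 2 + ω ^ 2 * (Matrix.trace F) ^ 2 := by
    rcases eq_or_ne ω 0 with h | h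
    · have : 0 < F.det ^ 2 := by positivity
      simp [h]; nlinarith
    · have h1 : 0 < ω ^ 2 * (Matrix.trace F) ^ 2 := by positivity
      nlinarith [sq_nonneg (ω ^ 2 - F.det)]
  have hdM : Matrix.det (F.map Complex.ofReal - (Complex.I * ω) • (1 : Matrix (Fin 2) (Fin 2) ℂ)) =
      ((F.det - ω^2 : ℝ) : ℂ) + ((-(ω * Matrix.trace F) : ℝ) : ℂ) * Complex.I := by
    rw [Matrix.det_fin_two]
    simp [Matrix.map_apply, Matrix.one_apply, hdF, htrF]
    apply Complex.ext <;> push_cast <;> simp [← Complex.ofReal_pow] <;> ring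
  have hdN : Matrix.det ((F.map Complex.ofReal)ᵀ + (Complex.I * ω) • (1 : Matrix (Fin 2) (Fin 2) ℂ)) =
      ((F.det - ω^2 : ℝ) : ℂ) + (((ω * Matrix.trace F) : ℝ) : ℂ) * Complex.I := by
    rw [Matrix.det_fin_two]
    simp [Matrix.map_apply, Matrix.one_apply, hdF, htrF]
    apply Complex.ext <;> push_cast <;> simp [← Complex.ofReal_pow] <;> ring
  have hMne : Matrix.det (F.map Complex.ofReal - (Complex.I * ω) • (1 : Matrix (Fin 2) (Fin 2) ℂ)) ≠ 0 := by
    rw [hdM]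
    intro h
    rw [Complex.ext_iff] at h
    simp [← Complex.ofReal_pow] at h
    obtain ⟨h1, h2 | h2⟩ := h
    · nlinarith
    · exact htrne h2
  have hNne : Matrix.det ((F.map Complex.ofReal)ᵀ + (Complex.I * ω) • (1 : Matrix (Fin 2) (Fin 2) ℂ)) ≠ 0 := by
    rw [hdN]
    intro h
    rw [Complex.ext_iff] at h
    simp [← Complex.ofReal_pow] at h
    obtain ⟨h1, h2 | h2⟩ := h
    · nlinarith
    · exact htrne h2
  refine ⟨(Matrix.isUnit_iff_isUnit_det _).mpr (isUnit_iff_ne_zero.mpr hMne), ?_⟩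
  have hA10 : A 1 0 = A 0 1 := congrFun (congrFun hAsymm.symm 1) 0
  rw [Matrix.inv_def, Matrix.inv_def]
  simp only [Matrix.adjugate_fin_two, Ring.inverse_eq_inv', Matrix.mul_apply,
    Fin.sum_univ_two, Matrix.smul_apply, smul_eq_mul, Matrix.sub_apply, Matrix.add_apply,
    Matrix.transpose_apply, Matrix.map_apply, Matrix.one_apply, Matrix.cons_val', 
    Matrix.cons_val_zero, Matrix.cons_val_one, Matrix.head_cons, Matrix.head_fin_const,
    Matrix.empty_val', Matrix.cons_val_fin_one, Matrix.of_apply]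
  rw [hdM, hdN, hA10, Complex.ofReal_div]
  rw [hdM] at hMne; rw [hdN] at hNne
  have hdenC : (((ω ^ 2 - F.det) ^ 2 + ω ^ 2 * F.trace ^ 2 : ℝ) : ℂ) ≠ 0 := by
    exact_mod_cast ne_of_gt hden
  have hprod : (((F.det - ω^2 : ℝ) : ℂ) + ((-(ω * Matrix.trace F) : ℝ) : ℂ) * Complex.I) *
      (((F.det - ω^2 : ℝ) : ℂ) + (((ω * Matrix.trace F) : ℝ) : ℂ) * Complex.I) =
      (((ω ^ 2 - F.det) ^ 2 + ω ^ 2 * F.trace ^ 2 : ℝ) : ℂ) := by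
    push_cast; ring_nf; simp only [Complex.I_sq]; ring
  simp only [show ((0:Fin 2) = 1) = False from by decide, show ((1:Fin 2) = 0) = False from by decide,
    if_false, if_true, mul_one, mul_zero, zero_mul, sub_zero, zero_sub, add_zero]
  rw [div_eq_mul_inv, ← hprod, mul_inv]
  ring_nf
  simp only [Complex.I_sq]
  push_cast
  ring
end

section
/- Let r > 0 and ρ ∈ (0,1), and for λ > 0 define S₁₁(ω;λ) = (2r(1-ρ)ω² + r(1-ρ)ρ²λ²) / ((ω² - r(1-ρ)λ)² + (r²/ρ²)ω²). Then for every fixed c > 0, the ratio S₁₁(√(r(1-ρ)λ); λ) / S₁₁(c; λ) tends to +∞ as λ → +∞. -/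
open Filter Polynomial

theorem spectral_peak_dominates (r ρ c : ℝ) (hr : 0 < r) (hρ : ρ ∈ Set.Ioo (0:ℝ) 1)
    (hc : 0 < c) :
    letI S : ℝ → ℝ → ℝ := fun lam ω =>
      (2 * r * (1 - ρ) * ω ^ 2 + r * (1 - ρ) * ρ ^ 2 * lam ^ 2) /
        ((ω ^ 2 - r * (1 - ρ) * lam) ^ 2 + (r ^ 2 / ρ ^ 2) * ω ^ 2)
    Tendsto (fun lam : ℝ => S lam (Real.sqrt (r * (1 - ρ) * lam)) / S lam c)
      atTop atTop := by
  obtain ⟨hρ0, hρ1⟩ := hρ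
  have h1ρ : 0 < 1 - ρ := by linarith
  set A : ℝ := r * (1 - ρ) with hA
  have hA0 : 0 < A := by positivity
  -- the polynomials P (numerator) and Q (denominator)
  set P : ℝ[X] := C (ρ^4 * A^2) * X ^ 3 + C (ρ^2 * (2*A^3 - 2*ρ^2*A*c^2)) * X ^ 2
      + C (ρ^2 * (-(4*A^2*c^2) + ρ^2*c^4 + r^2*c^2)) * X
      + C (2*A*(ρ^2*c^4 + r^2*c^2)) with hP
  set Q : ℝ[X] := C (r^2 * A * ρ^2) * X ^ 2 + C 0 * X + C (2*r^2*A*c^2) with hQ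
  have hp3 : (ρ^4 * A^2 : ℝ) ≠ 0 := by positivity
  have hq2 : (r^2 * A * ρ^2 : ℝ) ≠ 0 := by positivity
  have hPdeg : P.degree = 3 := degree_cubic hp3
  have hQdeg : Q.degree = 2 := degree_quadratic hq2
  have hQ0 : Q ≠ 0 := fun h => by simp [h] at hQdeg
  have hPlc : P.leadingCoeff = ρ^4 * A^2 := leadingCoeff_cubic hp3
  have hQlc : Q.leadingCoeff = r^2 * A * ρ^2 := leadingCoeff_quadratic hq2
  have key : Tendsto (fun x => eval x P / eval x Q) atTop atTop := by
    refine Polynomial.div_tendsto_atTop_of_degree_gt P Q ?_ hQ0 ?_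
    · rw [hPdeg, hQdeg]; norm_num
    · rw [hPlc, hQlc]; positivity
  refine key.congr' ?_
  filter_upwards [eventually_gt_atTop (0:ℝ)] with lam hlam
  have hs2 : (Real.sqrt (r * (1 - ρ) * lam)) ^ 2 = A * lam := by
    rw [Real.sq_sqrt (by positivity)]
  simp only [hs2, show Real.sqrt (A * lam) ^ 2 = A * lam from hs2, hP, hQ, eval_add, eval_mul, eval_pow, eval_C, eval_X]
  have hd1 : (A * lam - A * lam) ^ 2 + r ^ 2 / ρ ^ 2 * (A * lam) ≠ 0 := by
    simp only [sub_self]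
    positivity
  have hd2 : (c ^ 2 - A * lam) ^ 2 + r ^ 2 / ρ ^ 2 * c ^ 2 ≠ 0 := by positivity
  have hn2 : 2 * r * (1 - ρ) * c ^ 2 + r * (1 - ρ) * ρ ^ 2 * lam ^ 2 ≠ 0 := by positivity
  have hQe : r ^ 2 * A * ρ ^ 2 * lam ^ 2 + 0 * lam + 2 * r ^ 2 * A * c ^ 2 ≠ 0 := by
    simp only [zero_mul, add_zero]
    positivity
  have hρne : ρ ≠ 0 := ne_of_gt hρ0
  rw [hA] at *
  field_simp
  ring
end

section
/- In the regime α = ρλ with r > 0, ρ ∈ (0,1) fixed, the conditions λ₋ < λ < λ₊ hold for all sufficiently large λ, where λ∓ = (2(r+ρλ)²/r)(1 ∓ √(ρλ/(r+ρλ))); i.e., the nontrivial equilibrium is a stable spiral for all sufficiently large λ. -/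
/-!
Write `s = √(ρλ/(r+ρλ))`. Since `1 - s² = r/(r+ρλ)`, one has `λ₋ = 2(r+ρλ)/(1+s)`, and `s → 1`,
so `λ₋ ≈ (r+ρλ) < λ` because `ρ < 1`. On the other side `λ₊ ≥ 2(r+ρλ)²/r` grows quadratically.
-/

open Filter Topology

theorem tendsto_div_const_add_atTop_nhds_one {𝕜 : Type*} [Field 𝕜] [LinearOrder 𝕜]
    [IsStrictOrderedRing 𝕜] [TopologicalSpace 𝕜] [OrderTopology 𝕜] (c : 𝕜) :
    Tendsto (fun y : 𝕜 => y / (c + y)) atTop (𝓝 1) := by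
  have hc : Tendsto (fun y : 𝕜 => c / (c + y)) atTop (𝓝 0) :=
    tendsto_const_nhds.div_atTop (tendsto_atTop_add_const_left _ c tendsto_id)
  have h1 : Tendsto (fun y => 1 - c / (c + y)) atTop (𝓝 1) := by simpa using hc.const_sub 1
  refine h1.congr' ?_
  filter_upwards [eventually_gt_atTop (-c)] with y hy
  rw [eq_div_iff (by linarith), sub_mul, div_mul_cancel₀ _ (by linarith)]
  ring

theorem tendsto_sqrt_mul_div_add_mul_atTop (r : ℝ) {ρ : ℝ} (hρ : 0 < ρ) :
    Tendsto (fun x : ℝ => √(ρ * x / (r + ρ * x))) atTop (𝓝 1) := by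
  have h := (tendsto_div_const_add_atTop_nhds_one r).comp (tendsto_id.const_mul_atTop hρ)
  rw [← Real.sqrt_one]
  exact (Real.continuous_sqrt.tendsto 1).comp h

theorem sq_div_mul_one_sub_sqrt_div_add {r y : ℝ} (hr : 0 < r) (hy : 0 ≤ y) :
    (r + y) ^ 2 / r * (1 - √(y / (r + y))) = (r + y) / (1 + √(y / (r + y))) := by
  set s := √(y / (r + y))
  have hA : 0 < r + y := by linarith
  have hs : s ^ 2 * (r + y) = y := by
    rw [Real.sq_sqrt (by positivity), div_mul_cancel₀ _ hA.ne']
  rw [eq_div_iff (by positivity), mul_assoc, div_mul_eq_mul_div, div_eq_iff hr.ne']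
  linear_combination -(r + y) * hs

theorem eventually_lamMinus_lt (r : ℝ) {ρ : ℝ} (hr : 0 < r) (hρ : ρ ∈ Set.Ioo (0:ℝ) 1) :
    ∀ᶠ lam : ℝ in atTop,
      (2 * (r + ρ * lam) ^ 2 / r) * (1 - √(ρ * lam / (r + ρ * lam))) < lam := by
  obtain ⟨hρ0, hρ1⟩ := hρ
  have hs := (tendsto_sqrt_mul_div_add_mul_atTop r hρ0).eventually (lt_mem_nhds hρ1)
  filter_upwards [hs, eventually_gt_atTop (2 * r / (1 - ρ))] with lam hs hlam
  have hlam0 : 0 < lam := lt_trans (by have := sub_pos.2 hρ1; positivity) hlam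
  have hlam' : 2 * r < lam * (1 - ρ) := (div_lt_iff₀ (by linarith)).1 hlam
  rw [mul_div_assoc, mul_assoc, sq_div_mul_one_sub_sqrt_div_add hr (by positivity),
    ← mul_div_assoc, div_lt_iff₀ (by positivity)]
  nlinarith [mul_lt_mul_of_pos_left hs hlam0]

theorem eventually_lt_lamPlus (r : ℝ) {ρ : ℝ} (hr : 0 < r) (hρ : 0 < ρ) :
    ∀ᶠ lam : ℝ in atTop,
      lam < (2 * (r + ρ * lam) ^ 2 / r) * (1 + √(ρ * lam / (r + ρ * lam))) := by
  filter_upwards [eventually_gt_atTop (r / (2 * ρ ^ 2))] with lam hlam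
  have hlam0 : 0 < lam := lt_trans (by positivity) hlam
  have hquad : lam * r < 2 * (r + ρ * lam) ^ 2 := by
    have := (div_lt_iff₀ (by positivity)).1 hlam
    nlinarith [mul_pos hr hlam0, mul_pos hρ hlam0]
  calc lam < 2 * (r + ρ * lam) ^ 2 / r := by rwa [lt_div_iff₀ hr]
    _ ≤ _ := le_mul_of_one_le_right (by positivity) (by simp [Real.sqrt_nonneg])

theorem stable_spiral_for_large_lambda (r ρ : ℝ) (hr : 0 < r) (hρ : ρ ∈ Set.Ioo (0:ℝ) 1) :
    ∀ᶠ lam : ℝ in atTop,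
      (2 * (r + ρ * lam) ^ 2 / r) * (1 - Real.sqrt (ρ * lam / (r + ρ * lam))) < lam ∧
      lam < (2 * (r + ρ * lam) ^ 2 / r) * (1 + Real.sqrt (ρ * lam / (r + ρ * lam))) :=
  (eventually_lamMinus_lt r hr hρ).and (eventually_lt_lamPlus r hr hρ.1)
end
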